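/- Let T(n) = ∑_{m=1}^n (1/2)_m (1/2)_{n−m} / n!. Then 2·T(n+1) − T(n) = (1/2)_n / n! for all n ≥ 0 (with T(0) = 0). -/

import Mathlib

/-- Pochhammer symbol (rising factorial) `(x)_n`. -/
noncomputable def poch (x : ℝ) (n : ℕ) : ℝ := (ascPochhammer ℝ n).eval x

/-- `T(n) = ∑_{m=1}^n (1/2)_m (1/2)_{n−m} / n!`. -/
noncomputable def T (n : ℕ) : ℝ :=
  ∑ m ∈ Finset.Icc 1 n, poch (1/2) m * poch (1/2) (n - m) / n.factorial

/-!
Write `S(n) = ∑_{i+j=n} (x)_i (x)_j`. Peeling off the term with `i = 0` and using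
`(x)_{i+1} = (x + i) (x)_i` gives `S(n+1) = (x)_{n+1} + ∑_{i+j=n} (x + i) (x)_i (x)_j`; doing the same
with `j = 0` and adding the two expressions turns the weight into `2x + i + j = 2x + n`, so
`2 S(n+1) = 2 (x)_{n+1} + (2x + n) S(n)`. For `x = 1/2` and `T(n) = (S(n) - (1/2)_n) / n!` this is
the claimed recurrence.
-/

open Finset

lemma poch_zero (x : ℝ) : poch x 0 = 1 := by
  simp [poch]

lemma poch_succ (x : ℝ) (n : ℕ) : poch x (n + 1) = (x + n) * poch x n := by
  rw [poch, ascPochhammer_succ_eval, mul_comm, poch]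

noncomputable def pochConv (x : ℝ) (n : ℕ) : ℝ :=
  ∑ ij ∈ antidiagonal n, poch x ij.1 * poch x ij.2

lemma two_mul_pochConv_succ (x : ℝ) (n : ℕ) :
    2 * pochConv x (n + 1) = 2 * poch x (n + 1) + (2 * x + n) * pochConv x n := by
  have peel_left : pochConv x (n + 1) =
      poch x (n + 1) + ∑ ij ∈ antidiagonal n, (x + ij.1) * (poch x ij.1 * poch x ij.2) := by
    simp only [pochConv, Nat.sum_antidiagonal_succ, poch_zero, one_mul, poch_succ, mul_assoc]
  have peel_right : pochConv x (n + 1) =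
      poch x (n + 1) + ∑ ij ∈ antidiagonal n, (x + ij.2) * (poch x ij.1 * poch x ij.2) := by
    simp only [pochConv, Nat.sum_antidiagonal_succ', poch_zero, mul_one, poch_succ]
    congr 1
    exact sum_congr rfl fun ij _ ↦ by ring
  have symmetrized :
      ∑ ij ∈ antidiagonal n, (x + ij.1) * (poch x ij.1 * poch x ij.2)
        + ∑ ij ∈ antidiagonal n, (x + ij.2) * (poch x ij.1 * poch x ij.2)
      = (2 * x + n) * pochConv x n := by
    rw [← sum_add_distrib, pochConv, mul_sum]
    refine sum_congr rfl fun ij hij ↦ ?_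
    rw [← mem_antidiagonal.mp hij]
    push_cast
    ring
  linear_combination peel_left + peel_right + symmetrized

lemma T_eq_pochConv_sub (n : ℕ) :
    T n = (pochConv (1/2) n - poch (1/2) n) / n.factorial := by
  rw [T, ← sum_div, pochConv, Nat.sum_antidiagonal_eq_sum_range_succ
      (fun i j ↦ poch (1/2) i * poch (1/2) j), Nat.range_succ_eq_Icc_zero,
    ← add_sum_Ioc_eq_sum_Icc n.zero_le, ← Icc_add_one_left_eq_Ioc]
  simp [poch_zero]

theorem stmt8 (n : ℕ) :
    2 * T (n + 1) - T n = poch (1/2) n / n.factorial := by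
  have hrec := two_mul_pochConv_succ (1/2) n
  rw [T_eq_pochConv_sub, T_eq_pochConv_sub, Nat.factorial_succ]
  push_cast
  field_simp
  linarith
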